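/- Moment matching for projected systems: let L ∈ ℝ^{N×N}, u₀, e ∈ ℝ^N, σ not an eigenvalue of L, and V, W ∈ ℝ^{N×r} projection matrices with WᵀV = I_r. If (L − σI)⁻¹u₀ lies in the column span of V, i.e., (L − σI)⁻¹u₀ = V r₀ for some r₀ ∈ ℝ^r, and L_r := WᵀLV − σI_r is invertible, then the zeroth moment is matched: eᵀV (WᵀLV − σI_r)⁻¹ Wᵀu₀ = eᵀ(L − σI)⁻¹ u₀. -/

import Mathlib

/-!
Since `(L − σI)⁻¹u₀ = V r₀`, we have `Wᵀu₀ = Wᵀ(L − σI)V r₀ = (WᵀLV − σI_r) r₀` by `WᵀV = I_r`,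
so the reduced solve recovers `r₀` exactly and both moments equal `eᵀV r₀`.
-/

open Matrix

namespace Matrix

theorem mul_sub_smul_one_mul_of_mul_eq_one {n m R : Type*} [Fintype n] [DecidableEq n]
    [DecidableEq m] [CommRing R] {P : Matrix m n R} {V : Matrix n m R}
    (hPV : P * V = 1) (L : Matrix n n R) (σ : R) :
    P * (L - σ • 1) * V = P * L * V - σ • 1 := by
  rw [Matrix.mul_sub, Matrix.sub_mul, Matrix.mul_smul, Matrix.mul_one, Matrix.smul_mul, hPV]

/-- Petrov–Galerkin projection is exact on solutions lying in the trial space `range V`. -/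
theorem projected_inv_mulVec_eq_of_inv_mulVec_eq_mulVec {n m R : Type*} [Fintype n]
    [Fintype m] [DecidableEq n] [DecidableEq m] [CommRing R] {A : Matrix n n R} {P : Matrix m n R}
    {V : Matrix n m R} {u : n → R} {x : m → R} (hA : IsUnit A) (hPAV : IsUnit (P * A * V))
    (hu : A⁻¹ *ᵥ u = V *ᵥ x) :
    (P * A * V)⁻¹ *ᵥ (P *ᵥ u) = x := by
  have hu' : u = A *ᵥ (V *ᵥ x) := by
    rw [← hu, mulVec_mulVec, mul_nonsing_inv _ ((isUnit_iff_isUnit_det A).mp hA), one_mulVec]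
  have hPu : P *ᵥ u = (P * A * V) *ᵥ x := by
    rw [hu', mulVec_mulVec, mulVec_mulVec]
  rw [hPu, mulVec_mulVec, nonsing_inv_mul _ ((isUnit_iff_isUnit_det _).mp hPAV), one_mulVec]

end Matrix

/-- Moment matching for projected systems: if `WᵀV = I_r`, `(L − σI)⁻¹u₀ = V r₀` for some
`r₀`, and the reduced matrix `WᵀLV − σI_r` is invertible, then the zeroth moments of the
full and reduced systems agree:
`eᵀ V (WᵀLV − σI_r)⁻¹ Wᵀ u₀ = eᵀ (L − σI)⁻¹ u₀`. -/
theorem zeroth_moment_matching {N r : ℕ}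
    (L : Matrix (Fin N) (Fin N) ℝ) (e u₀ : Fin N → ℝ) (σ : ℝ)
    (V W : Matrix (Fin N) (Fin r) ℝ)
    (hbi : Wᵀ * V = (1 : Matrix (Fin r) (Fin r) ℝ))
    (hσ : IsUnit (L - σ • (1 : Matrix (Fin N) (Fin N) ℝ)))
    (r₀ : Fin r → ℝ)
    (hspan : ((L - σ • (1 : Matrix (Fin N) (Fin N) ℝ))⁻¹).mulVec u₀ = V.mulVec r₀)
    (hred : IsUnit (Wᵀ * L * V - σ • (1 : Matrix (Fin r) (Fin r) ℝ))) :
    e ⬝ᵥ V.mulVec (((Wᵀ * L * V - σ • (1 : Matrix (Fin r) (Fin r) ℝ))⁻¹).mulVec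
        (Wᵀ.mulVec u₀)) =
      e ⬝ᵥ ((L - σ • (1 : Matrix (Fin N) (Fin N) ℝ))⁻¹).mulVec u₀ := by
  rw [← mul_sub_smul_one_mul_of_mul_eq_one hbi] at hred ⊢
  rw [projected_inv_mulVec_eq_of_inv_mulVec_eq_mulVec hσ hred hspan, hspan]
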